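/- Under the smoothed-indicator test setup, suppose μ_j ≥ 0 for all j ∈ {1,…,p} and the set M := {j : μ_j = 0} is nonempty. Then Q₂ converges in probability to Ψ(0)·√(d_Mᵀ·Δ·V·Δ·d_M), where d_M ∈ ℝᵖ has j-th entry 1 if j ∈ M and 0 otherwise. (Intermediate claim in the proof of Theorem 1, part 1.) -/

import Mathlib

open MeasureTheory Filter Topology ProbabilityTheory Matrix

noncomputable section

/-- Convergence in probability to a constant `c`: for every `ε > 0`,
`P(|X_T − c| > ε) → 0` as `T → ∞`. -/
def TendstoInProb {Ω : Type*} [MeasurableSpace Ω] (P : Measure Ω)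
    (X : ℕ → Ω → ℝ) (c : ℝ) : Prop :=
  ∀ ε : ℝ, 0 < ε →
    Tendsto (fun T => P {ω | ε < |X T ω - c|}) atTop (nhds 0)

/-- Convergence in distribution: weak convergence of the laws of `X_T` under `P`
to the measure `ν` (tested against bounded continuous functions). -/
def TendstoInDistrib {Ω : Type*} [MeasurableSpace Ω] (P : Measure Ω)
    {E : Type*} [MeasurableSpace E] [TopologicalSpace E]
    (X : ℕ → Ω → E) (ν : Measure E) : Prop :=
  ∀ f : BoundedContinuousFunction E ℝ,
    Tendsto (fun T => ∫ ω, f (X T ω) ∂P) atTop (nhds (∫ x, f x ∂ν))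

/-- The standard normal density `φ(x) = exp(−x²/2)/√(2π)`. -/
def normalPDF (x : ℝ) : ℝ := Real.exp (-(x ^ 2) / 2) / Real.sqrt (2 * Real.pi)

/-- The standard normal CDF `Φ`. -/
def stdNormalCDF (x : ℝ) : ℝ := ∫ t in Set.Iic x, normalPDF t

/-- The adjustment term
`Λ_T(m, v) = v·ψ̃(K(T)·m)·K(T)/√T − √v·Σᵢ (Ψ(aᵢ⁻) − Ψ(aᵢ⁺))·φ(aᵢ·√T/(√v·K(T)))`,
where `ψt` is the left-limit of the derivative of `Ψ` and `ΨL i`, `ΨR i` are the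
one-sided limits of `Ψ` at the discontinuity points `a i`. -/
def Lambda (K : ℕ → ℝ) (ψt : ℝ → ℝ) {n : ℕ} (a ΨL ΨR : Fin n → ℝ)
    (T : ℕ) (m v : ℝ) : ℝ :=
  v * ψt (K T * m) * K T / Real.sqrt T -
    Real.sqrt v * ∑ i, (ΨL i - ΨR i) * normalPDF (a i * Real.sqrt T / (Real.sqrt v * K T))

/-- The positive semidefinite square root of a positive semidefinite matrix, as defined in
the older Mathlib (`Matrix.PosSemidef.sqrt`, since removed): `U·diag(√λ)·U*`. -/
def Matrix.PosSemidef.sqrt {n : Type*} [Fintype n] [DecidableEq n]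
    {A : Matrix n n ℝ} (hA : A.PosSemidef) : Matrix n n ℝ :=
  hA.1.eigenvectorUnitary.1 * diagonal (fun i => Real.sqrt (hA.1.eigenvalues i)) *
    (star hA.1.eigenvectorUnitary : Matrix n n ℝ)

/-- The Gaussian measure `N(c, V)` on `ℝᵖ`: the pushforward of the product of `p`
standard Gaussian measures under `z ↦ c + V^{1/2}·z`, where `V^{1/2}` is the positive
semidefinite square root of `V`. -/
def gaussianPi {p : ℕ} (c : Fin p → ℝ) {V : Matrix (Fin p) (Fin p) ℝ}
    (hV : V.PosSemidef) : Measure (Fin p → ℝ) :=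
  Measure.map (fun z => c + hV.sqrt.mulVec z)
    (Measure.pi fun _ : Fin p => gaussianReal 0 1)

/-- `Ψ̂_{T,j} = Ψ(K(T)·θ̂_{T,j}·μ̂_{T,j})`. -/
def Psihat {p : ℕ} {Ω : Type*} (Ψ : ℝ → ℝ) (K : ℕ → ℝ)
    (muhat thetahat : ℕ → Ω → Fin p → ℝ) (T : ℕ) (ω : Ω) (j : Fin p) : ℝ :=
  Ψ (K T * thetahat T ω j * muhat T ω j)

/-- The statistic `Q₁ = √T·Σⱼ Ψ̂_{T,j}·θ̂_{T,j}·μ̂_{T,j} − Σⱼ Λ_T(θ̂_{T,j}·μ̂_{T,j}, θ̂_{T,j}²·v̂_{T,jj})`. -/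
def Q1stat {p : ℕ} {Ω : Type*} (Ψ ψt : ℝ → ℝ) {n : ℕ} (a ΨL ΨR : Fin n → ℝ)
    (K : ℕ → ℝ) (muhat : ℕ → Ω → Fin p → ℝ)
    (Vhat : ℕ → Ω → Matrix (Fin p) (Fin p) ℝ)
    (thetahat : ℕ → Ω → Fin p → ℝ) (T : ℕ) (ω : Ω) : ℝ :=
  Real.sqrt T * ∑ j, Psihat Ψ K muhat thetahat T ω j * thetahat T ω j * muhat T ω j
    - ∑ j, Lambda K ψt a ΨL ΨR T (thetahat T ω j * muhat T ω j)
        ((thetahat T ω j) ^ 2 * Vhat T ω j j)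

/-- The statistic `Q₂ = √(Σᵢ Σⱼ Ψ̂_{T,i}·θ̂_{T,i}·v̂_{T,ij}·θ̂_{T,j}·Ψ̂_{T,j})`. -/
def Q2stat {p : ℕ} {Ω : Type*} (Ψ : ℝ → ℝ) (K : ℕ → ℝ)
    (muhat : ℕ → Ω → Fin p → ℝ)
    (Vhat : ℕ → Ω → Matrix (Fin p) (Fin p) ℝ)
    (thetahat : ℕ → Ω → Fin p → ℝ) (T : ℕ) (ω : Ω) : ℝ :=
  Real.sqrt (∑ i, ∑ j, Psihat Ψ K muhat thetahat T ω i * thetahat T ω i *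
    Vhat T ω i j * thetahat T ω j * Psihat Ψ K muhat thetahat T ω j)

/-- The test statistic `Q = Φ(Q₁/Q₂)` if `Q₂ > 0`, and `Q = 1` if `Q₂ = 0`. -/
def Qstat {p : ℕ} {Ω : Type*} (Ψ ψt : ℝ → ℝ) {n : ℕ} (a ΨL ΨR : Fin n → ℝ)
    (K : ℕ → ℝ) (muhat : ℕ → Ω → Fin p → ℝ)
    (Vhat : ℕ → Ω → Matrix (Fin p) (Fin p) ℝ)
    (thetahat : ℕ → Ω → Fin p → ℝ) (T : ℕ) (ω : Ω) : ℝ :=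
  if 0 < Q2stat Ψ K muhat Vhat thetahat T ω then
    stdNormalCDF (Q1stat Ψ ψt a ΨL ΨR K muhat Vhat thetahat T ω /
      Q2stat Ψ K muhat Vhat thetahat T ω)
  else 1

/-! By [D1], each `√T·(μ̂_{T,j} − μ_j)` is tight. Hence `μ̂_T → μ` in probability and, since
`K(T)/√T → 0`, also `K(T)·μ̂_{T,j} → 0` when `μ_j = 0`; then `Ψ̂_{T,j} → Ψ(0)` because `Ψ` is
continuous at `0`. When `μ_j > 0`, with probability tending to one `θ̂_{T,j}·μ̂_{T,j} ≥ θ_j·μ_j/2`,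
so `Ψ̂_{T,j} ≤ Ψ(K(T)·θ_j·μ_j/2) → 0` by monotonicity. As `Q₂` is a continuous function of
`(Ψ̂_T, θ̂_T, V̂_T)`, the continuous mapping theorem for convergence in probability finishes. -/

lemma tendsto_zero_of_tendsto_sqrt_mul {f : ℕ → ℝ} (hf : ∀ T, 0 ≤ f T)
    (h : Tendsto (fun T : ℕ => √(T : ℝ) * f T) atTop (𝓝 0)) : Tendsto f atTop (𝓝 0) :=
  squeeze_zero' (.of_forall hf) ((eventually_ge_atTop 1).mono fun T hT =>
    le_mul_of_one_le_left (hf T) (Real.one_le_sqrt.2 (by exact_mod_cast hT))) h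

lemma sqrt_sum_sum_const_mul {ι : Type*} [Fintype ι] {c : ℝ} (hc : 0 ≤ c) (d θ : ι → ℝ)
    (V : Matrix ι ι ℝ) :
    √(∑ i, ∑ j, c * d i * θ i * V i j * θ j * (c * d j)) =
      c * √(∑ i, ∑ j, d i * θ i * V i j * θ j * d j) := by
  have hsum : ∑ i, ∑ j, c * d i * θ i * V i j * θ j * (c * d j) =
      c ^ 2 * ∑ i, ∑ j, d i * θ i * V i j * θ j * d j := by
    simp only [Finset.mul_sum]
    exact Finset.sum_congr rfl fun i _ => Finset.sum_congr rfl fun j _ => by ring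
  rw [hsum, Real.sqrt_mul (sq_nonneg c), Real.sqrt_sq hc]

section ConvergenceInProbability

variable {Ω : Type*} [MeasurableSpace Ω] {P : Measure Ω}

def BoundedInProb (P : Measure Ω) (Y : ℕ → Ω → ℝ) : Prop :=
  ∀ ε : ENNReal, 0 < ε → ∃ M : ℝ, ∀ᶠ T in atTop, P {ω | M ≤ |Y T ω|} ≤ ε

theorem TendstoInProb.comp_continuousAt_pi {ι : Type*} [Fintype ι]
    {X : ι → ℕ → Ω → ℝ} {c : ι → ℝ} (hX : ∀ i, TendstoInProb P (X i) (c i))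
    {g : (ι → ℝ) → ℝ} (hg : ContinuousAt g c) :
    TendstoInProb P (fun T ω => g fun i => X i T ω) (g c) := by
  intro ε hε
  obtain ⟨δ, hδ, hgδ⟩ := Metric.continuousAt_iff.mp hg ε hε
  have hsub : ∀ T, {ω | ε < |g (fun i => X i T ω) - g c|} ⊆
      ⋃ i, {ω | δ / 2 < |X i T ω - c i|} := by
    intro T ω hω
    by_contra hnot
    simp only [Set.mem_iUnion, Set.mem_ofPred_eq, not_exists, not_lt] at hω hnot
    have hclose : dist (fun i => X i T ω) c < δ :=
      (dist_pi_lt_iff hδ).2 fun i => by rw [Real.dist_eq]; linarith [hnot i]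
    exact hω.not_ge (hgδ hclose).le
  have hsum : Tendsto (fun T => ∑ i, P {ω | δ / 2 < |X i T ω - c i|}) atTop (𝓝 0) := by
    simpa using tendsto_finsetSum Finset.univ fun i _ => hX i (δ / 2) (by positivity)
  exact tendsto_of_tendsto_of_tendsto_of_le_of_le tendsto_const_nhds hsum
    (fun _ => zero_le) fun T => (measure_mono (hsub T)).trans (measure_iUnion_fintype_le _ _)

theorem TendstoInProb.comp_continuousAt {X : ℕ → Ω → ℝ} {c : ℝ} (hX : TendstoInProb P X c)
    {g : ℝ → ℝ} (hg : ContinuousAt g c) :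
    TendstoInProb P (fun T ω => g (X T ω)) (g c) :=
  comp_continuousAt_pi (X := fun _ : Unit => X) (fun _ => hX)
    (g := fun y => g (y ())) (hg.comp (continuous_apply ()).continuousAt)

theorem TendstoInProb.mul {X Y : ℕ → Ω → ℝ} {c d : ℝ} (hX : TendstoInProb P X c)
    (hY : TendstoInProb P Y d) :
    TendstoInProb P (fun T ω => X T ω * Y T ω) (c * d) :=
  comp_continuousAt_pi (X := fun b : Bool => if b then X else Y) (c := fun b => if b then c else d)
    (fun b => by cases b <;> assumption) (g := fun y => y true * y false)
    ((continuous_apply true).mul (continuous_apply false)).continuousAt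

theorem TendstoInProb.sum {ι : Type*} [Fintype ι] {X : ι → ℕ → Ω → ℝ} {c : ι → ℝ}
    (hX : ∀ i, TendstoInProb P (X i) (c i)) :
    TendstoInProb P (fun T ω => ∑ i, X i T ω) (∑ i, c i) :=
  comp_continuousAt_pi hX (g := fun y => ∑ i, y i)
    (continuous_finsetSum _ fun i _ => continuous_apply i).continuousAt

theorem BoundedInProb.tendstoInProb_of_abs_sub_le {Y : ℕ → Ω → ℝ} (hY : BoundedInProb P Y)
    {a : ℕ → ℝ} (ha : Tendsto a atTop (𝓝 0)) {X : ℕ → Ω → ℝ} {c : ℝ}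
    (hXY : ∀ᶠ T in atTop, ∀ ω, |X T ω - c| ≤ a T * |Y T ω|) : TendstoInProb P X c := by
  intro η hη
  refine ENNReal.tendsto_nhds_zero.2 fun ε hε => ?_
  obtain ⟨M, hM⟩ := hY ε hε
  have haM : ∀ᶠ T in atTop, a T * M < η := by
    simpa using (ha.mul_const M).eventually_lt_const (by simpa using hη)
  filter_upwards [hM, haM, hXY] with T hMT haMT hXYT
  refine (measure_mono fun ω hω => ?_).trans hMT
  by_contra hlt
  simp only [Set.mem_ofPred_eq, not_le] at hω hlt
  nlinarith [hXYT ω, abs_nonneg (Y T ω)]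

lemma BoundedInProb.tendstoInProb_of_sqrt_mul_sub {X : ℕ → Ω → ℝ} {c : ℝ}
    (h : BoundedInProb P fun T ω => √(T : ℝ) * (X T ω - c)) : TendstoInProb P X c := by
  refine h.tendstoInProb_of_abs_sub_le (a := fun T => (√(T : ℝ))⁻¹)
    (tendsto_inv_atTop_zero.comp (Real.tendsto_sqrt_atTop.comp tendsto_natCast_atTop_atTop))
    ((eventually_ge_atTop 1).mono fun T hT ω => ?_)
  have hT : 0 < √(T : ℝ) := Real.sqrt_pos.2 (by exact_mod_cast hT)
  rw [abs_mul, abs_of_pos hT, inv_mul_cancel_left₀ hT.ne']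

lemma BoundedInProb.tendstoInProb_mul_zero {K : ℕ → ℝ} {X : ℕ → Ω → ℝ}
    (h : BoundedInProb P fun T ω => √(T : ℝ) * X T ω) (hK : ∀ T, 0 < K T)
    (hKo : Tendsto (fun T : ℕ => K T / √(T : ℝ)) atTop (𝓝 0)) :
    TendstoInProb P (fun T ω => K T * X T ω) 0 := by
  refine h.tendstoInProb_of_abs_sub_le hKo ((eventually_ge_atTop 1).mono fun T hT ω => ?_)
  have hT : 0 < √(T : ℝ) := Real.sqrt_pos.2 (by exact_mod_cast hT)
  rw [sub_zero, abs_mul, abs_mul, abs_of_pos (hK T), abs_of_pos hT]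
  exact le_of_eq (by field_simp)

lemma TendstoInProb.antitone_comp_mul_of_pos {Ψ : ℝ → ℝ} {K : ℕ → ℝ} (hΨ : Antitone Ψ)
    (hΨnn : ∀ x, 0 ≤ Ψ x) (hK : ∀ T, 0 ≤ K T) {X : ℕ → Ω → ℝ} {c : ℝ}
    (hX : TendstoInProb P X c) (hc : 0 < c)
    (hΨK : Tendsto (fun T => Ψ (K T * (c / 2))) atTop (𝓝 0)) :
    TendstoInProb P (fun T ω => Ψ (K T * X T ω)) 0 := by
  intro η hη
  refine tendsto_of_tendsto_of_tendsto_of_le_of_le' tendsto_const_nhds (hX (c / 2) (by positivity))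
    (.of_forall fun _ => zero_le) ?_
  filter_upwards [hΨK.eventually_lt_const hη] with T hT
  refine measure_mono fun ω hω => ?_
  by_contra hnear
  simp only [Set.mem_ofPred_eq, not_lt, sub_zero, abs_of_nonneg (hΨnn _)] at hω hnear
  have hX : c / 2 ≤ X T ω := by linarith [(abs_le.1 hnear).1]
  linarith [hΨ (mul_le_mul_of_nonneg_left hX (hK T))]

end ConvergenceInProbability

section Tightness

variable {Ω : Type*} [MeasurableSpace Ω] {P : Measure Ω} [IsProbabilityMeasure P]
  {E : Type*} [TopologicalSpace E] [MeasurableSpace E] [OpensMeasurableSpace E]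

def tailRamp (C x : ℝ) : ℝ := min 1 (max 0 (|x| - C))

lemma tailRamp_nonneg (C x : ℝ) : 0 ≤ tailRamp C x :=
  le_min zero_le_one (le_max_left _ _)

lemma tailRamp_le_one (C x : ℝ) : tailRamp C x ≤ 1 := min_le_left _ _

lemma one_le_tailRamp {C x : ℝ} (h : C + 1 ≤ |x|) : 1 ≤ tailRamp C x :=
  le_min le_rfl (le_max_of_le_right (by linarith))

lemma tailRamp_eq_zero {C x : ℝ} (h : |x| ≤ C) : tailRamp C x = 0 := by
  rw [tailRamp, max_eq_left (by linarith), min_eq_right zero_le_one]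

@[fun_prop]
lemma continuous_tailRamp (C : ℝ) : Continuous (tailRamp C) := by
  unfold tailRamp
  fun_prop

lemma tendsto_integral_tailRamp (ν : Measure E) [IsFiniteMeasure ν] {g : E → ℝ}
    (hg : Continuous g) :
    Tendsto (fun C : ℕ => ∫ z, tailRamp C (g z) ∂ν) atTop (𝓝 0) := by
  have hdom := tendsto_integral_of_dominated_convergence (μ := ν)
    (F := fun (C : ℕ) z => tailRamp C (g z)) (f := fun _ => 0) (fun _ => 1)
    (fun C => ((continuous_tailRamp C).comp hg).aestronglyMeasurable) (integrable_const 1)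
    (fun C => Eventually.of_forall fun z => by
      rw [Real.norm_eq_abs, abs_of_nonneg (tailRamp_nonneg _ _)]
      exact tailRamp_le_one _ _)
    (Eventually.of_forall fun z => tendsto_const_nhds.congr' <| by
      filter_upwards [eventually_ge_atTop ⌈|g z|⌉₊] with C hC
      exact (tailRamp_eq_zero ((Nat.le_ceil _).trans (by exact_mod_cast hC))).symm)
  simpa using hdom

/-- `Y T` need not be measurable: integrability, which is all Markov's inequality needs, comes
from the integrals of `1 + tailRamp C ∘ g ∘ Y T` tending to a positive limit, so that they are
eventually nonzero. -/
theorem TendstoInDistrib.boundedInProb_comp {Y : ℕ → Ω → E} {ν : Measure E}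
    [IsProbabilityMeasure ν] (hY : TendstoInDistrib P Y ν) {g : E → ℝ} (hg : Continuous g) :
    BoundedInProb P fun T ω => g (Y T ω) := by
  intro ε hε
  obtain ⟨δ, -, hδ0, hδε⟩ := ENNReal.lt_iff_exists_real_btwn.1 hε
  have hδ : 0 < δ := ENNReal.ofReal_pos.1 hδ0
  obtain ⟨C, hC⟩ := ((tendsto_integral_tailRamp ν hg).eventually_lt_const hδ).exists
  let F : BoundedContinuousFunction E ℝ :=
    .ofNormedAddCommGroup (fun z => 1 + tailRamp C (g z)) (by fun_prop) 2 fun z => by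
      rw [Real.norm_eq_abs, abs_le]
      constructor <;> linarith [tailRamp_nonneg C (g z), tailRamp_le_one C (g z)]
  have hFν : ∫ z, F z ∂ν = 1 + ∫ z, tailRamp C (g z) ∂ν := by
    have hramp : Integrable (fun z => tailRamp C (g z)) ν :=
      .of_bound ((continuous_tailRamp C).comp hg).aestronglyMeasurable 1 <| .of_forall fun z => by
        rw [Real.norm_eq_abs, abs_of_nonneg (tailRamp_nonneg _ _)]
        exact tailRamp_le_one _ _
    simp [F, integral_add (integrable_const 1) hramp]
  have hbetween : ∫ z, F z ∂ν ∈ Set.Ioo 0 (1 + δ) := by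
    have h0 : 0 ≤ ∫ z, tailRamp C (g z) ∂ν := integral_nonneg fun z => tailRamp_nonneg _ _
    rw [hFν]
    constructor <;> linarith
  refine ⟨C + 1, ?_⟩
  filter_upwards [(hY F).eventually (Ioo_mem_nhds hbetween.1 hbetween.2)] with T ⟨hpos, hlt⟩
  have hFY : Integrable (fun ω => F (Y T ω)) P := .of_integral_ne_zero hpos.ne'
  have hrampY : Integrable (fun ω => tailRamp C (g (Y T ω))) P := by
    refine (hFY.sub (integrable_const 1)).congr (.of_forall fun ω => ?_)
    simp [F]
  have hrampY_lt : ∫ ω, tailRamp C (g (Y T ω)) ∂P < δ := by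
    have : ∫ ω, F (Y T ω) ∂P = 1 + ∫ ω, tailRamp C (g (Y T ω)) ∂P := by
      simp [F, integral_add (integrable_const 1) hrampY]
    linarith
  have hmarkov := mul_meas_ge_le_integral_of_nonneg
    (Eventually.of_forall fun ω => tailRamp_nonneg C (g (Y T ω))) hrampY 1
  calc P {ω | C + 1 ≤ |g (Y T ω)|}
      ≤ P {ω | 1 ≤ tailRamp C (g (Y T ω))} := measure_mono fun ω => one_le_tailRamp
    _ = ENNReal.ofReal (P.real {ω | 1 ≤ tailRamp C (g (Y T ω))}) := (ofReal_measureReal).symm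
    _ ≤ ENNReal.ofReal δ := ENNReal.ofReal_le_ofReal (by linarith)
    _ ≤ ε := hδε.le

end Tightness

instance {p : ℕ} (c : Fin p → ℝ) {V : Matrix (Fin p) (Fin p) ℝ} (hV : V.PosSemidef) :
    IsProbabilityMeasure (gaussianPi c hV) :=
  Measure.isProbabilityMeasure_map
    (continuous_const.add (continuous_const.matrix_mulVec continuous_id)).measurable.aemeasurable

section SmoothedIndicator

variable {Ω : Type*} [MeasurableSpace Ω] {P : Measure Ω} {K : ℕ → ℝ} {Ψ : ℝ → ℝ} {p : ℕ}
  {muhat thetahat : ℕ → Ω → Fin p → ℝ} {μ θ : Fin p → ℝ} {j : Fin p}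

lemma tendstoInProb_Psihat_of_eq_zero (hΨ : ContinuousAt Ψ 0) (hK : ∀ T, 0 < K T)
    (hKo : Tendsto (fun T : ℕ => K T / √(T : ℝ)) atTop (𝓝 0))
    (hθ : TendstoInProb P (fun T ω => thetahat T ω j) (θ j))
    (hμ : BoundedInProb P fun T ω => √(T : ℝ) * muhat T ω j) :
    TendstoInProb P (fun T ω => Psihat Ψ K muhat thetahat T ω j) (Ψ 0) := by
  have hprod := hθ.mul (hμ.tendstoInProb_mul_zero hK hKo)
  rw [mul_zero] at hprod
  convert hprod.comp_continuousAt hΨ using 3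
  simp only [Psihat]
  ring_nf

lemma tendstoInProb_Psihat (hΨanti : Antitone Ψ) (hΨnn : ∀ x, 0 ≤ Ψ x)
    (hΨ : ContinuousAt Ψ 0) (hK : ∀ T, 0 < K T)
    (hKo : Tendsto (fun T : ℕ => K T / √(T : ℝ)) atTop (𝓝 0))
    (hΨK : ∀ x, 0 < x → Tendsto (fun T => Ψ (K T * x)) atTop (𝓝 0))
    (hθ : TendstoInProb P (fun T ω => thetahat T ω j) (θ j)) (hθpos : 0 < θ j)
    (hμ : BoundedInProb P fun T ω => √(T : ℝ) * (muhat T ω j - μ j)) (hμnn : 0 ≤ μ j) :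
    TendstoInProb P (fun T ω => Psihat Ψ K muhat thetahat T ω j)
      (Ψ 0 * if μ j = 0 then 1 else 0) := by
  rcases hμnn.eq_or_lt with hzero | hpos
  · rw [if_pos hzero.symm, mul_one]
    exact tendstoInProb_Psihat_of_eq_zero hΨ hK hKo hθ (by simpa [← hzero] using hμ)
  · rw [if_neg hpos.ne', mul_zero]
    have hprod := hθ.mul hμ.tendstoInProb_of_sqrt_mul_sub
    convert hprod.antitone_comp_mul_of_pos hΨanti hΨnn (fun T => (hK T).le)
      (mul_pos hθpos hpos) (hΨK _ (by positivity)) using 3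
    simp only [Psihat, mul_assoc]

end SmoothedIndicator

theorem Q2_tendsto_under_null_boundary_general
    {Ω : Type*} [MeasurableSpace Ω] (P : Measure Ω) [IsProbabilityMeasure P]
    {p : ℕ}
    -- the smoothed indicator
    (Ψ ψ : ℝ → ℝ) {n : ℕ} (a : Fin n → ℝ)
    (hΨanti : Antitone Ψ) (hΨ01 : ∀ x : ℝ, 0 ≤ Ψ x ∧ Ψ x ≤ 1)
    (hane : ∀ i, a i ≠ 0)
    (hderiv : ∀ x ∉ Set.range a, HasDerivAt Ψ (ψ x) x)
    -- the tuning sequence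
    (K : ℕ → ℝ) (hKpos : ∀ T, 0 < K T)
    (hKo : Tendsto (fun T : ℕ => K T / Real.sqrt T) atTop (nhds 0))
    (hA6 : ∀ x : ℝ, 0 < x →
      Tendsto (fun T : ℕ => Real.sqrt T * Ψ (K T * x)) atTop (nhds 0))
    -- the data
    (muhat thetahat : ℕ → Ω → Fin p → ℝ)
    (Vhat : ℕ → Ω → Matrix (Fin p) (Fin p) ℝ)
    -- the parameters
    (μ : Fin p → ℝ) (V : Matrix (Fin p) (Fin p) ℝ) (hV : V.PosSemidef)
    (θ : Fin p → ℝ) (hθpos : ∀ j, 0 < θ j)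
    -- [D1] : √T·(μ̂_T − μ) converges in distribution to N(0, V)
    (hD1 : TendstoInDistrib P
      (fun T ω j => Real.sqrt T * (muhat T ω j - μ j)) (gaussianPi 0 hV))
    -- [D3] : V̂_T → V in probability entrywise
    (hD3 : ∀ i j, TendstoInProb P (fun T ω => Vhat T ω i j) (V i j))
    -- [D4] : θ̂_T → θ in probability
    (hD4 : ∀ j, TendstoInProb P (fun T ω => thetahat T ω j) (θ j))
    -- the null hypothesis holds and `M = {j : μ_j = 0}` is nonempty
    (hnull : ∀ j, 0 ≤ μ j) :
    TendstoInProb P (Q2stat Ψ K muhat Vhat thetahat)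
      (Ψ 0 * Real.sqrt (∑ i, ∑ j,
        (if μ i = 0 then (1 : ℝ) else 0) * θ i * V i j * θ j *
          (if μ j = 0 then (1 : ℝ) else 0))) := by
  have hΨnn : ∀ x, 0 ≤ Ψ x := fun x => (hΨ01 x).1
  have hΨcont : ContinuousAt Ψ 0 := (hderiv 0 fun ⟨i, hi⟩ => hane i hi).continuousAt
  have hΨK : ∀ x, 0 < x → Tendsto (fun T => Ψ (K T * x)) atTop (𝓝 0) := fun x hx =>
    tendsto_zero_of_tendsto_sqrt_mul (fun T => hΨnn _) (hA6 x hx)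
  have hΨhat : ∀ j, TendstoInProb P (fun T ω => Psihat Ψ K muhat thetahat T ω j)
      (Ψ 0 * if μ j = 0 then 1 else 0) := fun j =>
    tendstoInProb_Psihat hΨanti hΨnn hΨcont hKpos hKo hΨK (hD4 j) (hθpos j)
      (hD1.boundedInProb_comp (continuous_apply j)) (hnull j)
  rw [← sqrt_sum_sum_const_mul (hΨnn 0)]
  exact (TendstoInProb.sum fun i => TendstoInProb.sum fun j =>
    ((((hΨhat i).mul (hD4 i)).mul (hD3 i j)).mul (hD4 j)).mul (hΨhat j)).comp_continuousAt
      Real.continuous_sqrt.continuousAt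

/-- Intermediate claim in the proof of Theorem 1, part 1: under the null with at least
one binding constraint, `Q₂ → Ψ(0)·√(d_Mᵀ·Δ·V·Δ·d_M)` in probability. -/
theorem Q2_tendsto_under_null_boundary
    {Ω : Type*} [MeasurableSpace Ω] (P : Measure Ω) [IsProbabilityMeasure P]
    {p : ℕ} (hp : 0 < p)
    -- the smoothed indicator
    (Ψ ψ ψt : ℝ → ℝ) {n : ℕ} (a ΨL ΨR : Fin n → ℝ) (bΨ : ℝ)
    (hΨanti : Antitone Ψ) (hΨ01 : ∀ x : ℝ, 0 ≤ Ψ x ∧ Ψ x ≤ 1) (hΨ0 : 0 < Ψ 0)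
    (ha : StrictMono a) (hane : ∀ i, a i ≠ 0)
    (hderiv : ∀ x ∉ Set.range a, HasDerivAt Ψ (ψ x) x)
    (hψcont : ContinuousOn ψ (Set.range a)ᶜ)
    (hψbd : ∀ x ∉ Set.range a, |ψ x| ≤ bΨ)
    (hψt : ∀ x : ℝ, Tendsto ψ (nhdsWithin x (Set.Iio x)) (nhds (ψt x)))
    (hΨL : ∀ i, Tendsto Ψ (nhdsWithin (a i) (Set.Iio (a i))) (nhds (ΨL i)))
    (hΨR : ∀ i, Tendsto Ψ (nhdsWithin (a i) (Set.Ioi (a i))) (nhds (ΨR i)))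
    -- the tuning sequence
    (K : ℕ → ℝ) (hKpos : ∀ T, 0 < K T) (hKmono : StrictMono K)
    (hKtop : Tendsto K atTop atTop)
    (hKo : Tendsto (fun T : ℕ => K T / Real.sqrt T) atTop (nhds 0))
    (hA6 : ∀ x : ℝ, 0 < x →
      Tendsto (fun T : ℕ => Real.sqrt T * Ψ (K T * x)) atTop (nhds 0))
    -- the data
    (muhat thetahat : ℕ → Ω → Fin p → ℝ)
    (Vhat : ℕ → Ω → Matrix (Fin p) (Fin p) ℝ)
    (hVhatPSD : ∀ T, ∀ᵐ ω ∂P, (Vhat T ω).PosSemidef)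
    (hthetahatpos : ∀ T, ∀ᵐ ω ∂P, ∀ j, 0 < thetahat T ω j)
    -- the parameters
    (μ : Fin p → ℝ) (V : Matrix (Fin p) (Fin p) ℝ) (hV : V.PosSemidef)
    (θ : Fin p → ℝ) (hθpos : ∀ j, 0 < θ j)
    -- [D1] : √T·(μ̂_T − μ) converges in distribution to N(0, V)
    (hD1 : TendstoInDistrib P
      (fun T ω j => Real.sqrt T * (muhat T ω j - μ j)) (gaussianPi 0 hV))
    -- [D2] : V·Δ·d(μ) ≠ 0 whenever d(μ) ≠ 0
    (hD2 : (fun j => if μ j < 0 then (1 : ℝ) else if μ j = 0 then Ψ 0 else 0) ≠ 0 →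
      V.mulVec (fun j =>
        θ j * (if μ j < 0 then (1 : ℝ) else if μ j = 0 then Ψ 0 else 0)) ≠ 0)
    -- [D3] : V̂_T → V in probability entrywise
    (hD3 : ∀ i j, TendstoInProb P (fun T ω => Vhat T ω i j) (V i j))
    -- [D4] : θ̂_T → θ in probability
    (hD4 : ∀ j, TendstoInProb P (fun T ω => thetahat T ω j) (θ j))
    -- the null hypothesis holds and `M = {j : μ_j = 0}` is nonempty
    (hnull : ∀ j, 0 ≤ μ j) (hM : ∃ j, μ j = 0) :
    TendstoInProb P (Q2stat Ψ K muhat Vhat thetahat)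
      (Ψ 0 * Real.sqrt (∑ i, ∑ j,
        (if μ i = 0 then (1 : ℝ) else 0) * θ i * V i j * θ j *
          (if μ j = 0 then (1 : ℝ) else 0))) :=
  Q2_tendsto_under_null_boundary_general P Ψ ψ a hΨanti hΨ01 hane hderiv K hKpos hKo hA6 muhat
    thetahat Vhat μ V hV θ hθpos hD1 hD3 hD4 hnull

end
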